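/- arXiv:1603.04499 — 2 statements merged into one kernel-verified Lean document; each statement's English description precedes it below -/
import Mathlib

section
/- Let F be an n×n real Metzler matrix (all off-diagonal entries nonnegative) that is Hurwitz stable. Then there exists a vector v ∈ ℝⁿ with all entries strictly positive such that every entry of the row vector vᵀ F is strictly negative. -/
/-!
Shifting `F` by `c • 1` with `c = ∑ i, |F i i|` gives an entrywise nonnegative matrix `B`. For
`t ≥ 0` the matrix `t • 1 - F` is invertible, since the real eigenvalues of `F` are negative. For
large `t`, its inverse `((t + c) • 1 - B)⁻¹` is a Neumann series of nonnegative matrices.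
Nonnegativity of `(t • 1 - F)⁻¹` then propagates down to `t = 0` by continuous induction. It is
preserved under limits, and if `R = (t • 1 - F)⁻¹ ≥ 0` then
`((t - ε) • 1 - F)⁻¹ = (1 - ε • R)⁻¹ * R ≥ 0` for small `ε > 0`. Hence `(-F)⁻¹ ≥ 0`, and
`v = 1 ᵥ* (-F)⁻¹` satisfies `v ᵥ* F = -1`. Finally `v > 0`: as `F` is Metzler and `v ≥ 0`, the
only term of `(v ᵥ* F) j` that can be negative is `v j * F j j`.
-/

open Matrix Set

namespace Matrix

variable {m n ι : Type*}

def Nonneg (M : Matrix m n ℝ) : Prop := ∀ i j, 0 ≤ M i j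

def IsMetzler (F : Matrix ι ι ℝ) : Prop := ∀ i j, i ≠ j → 0 ≤ F i j

theorem isClosed_setOf_nonneg : IsClosed {M : Matrix m n ℝ | M.Nonneg} := by
  simp only [Nonneg, ofPred_forall]
  exact isClosed_iInter fun i => isClosed_iInter fun j =>
    isClosed_le continuous_const ((continuous_apply j).comp (continuous_apply i))

theorem map_mem_spectrum_map {K L : Type*} [Fintype ι] [DecidableEq ι] [Field K] [Field L]
    (f : K →+* L) {A : Matrix ι ι K} {t : K} (ht : t ∈ spectrum K A) :
    f t ∈ spectrum L (A.map f) := by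
  rw [mem_spectrum_iff_isRoot_charpoly] at ht ⊢
  rw [charpoly_map]
  exact ht.map

namespace Nonneg

variable {A B : Matrix ι ι ℝ}

theorem one [DecidableEq ι] : (1 : Matrix ι ι ℝ).Nonneg := fun i j => by
  by_cases h : i = j <;> simp [one_apply, h]

theorem mul [Fintype ι] (hA : A.Nonneg) (hB : B.Nonneg) : (A * B).Nonneg := fun i j =>
  Finset.sum_nonneg fun k _ => mul_nonneg (hA i k) (hB k j)

theorem pow [Fintype ι] [DecidableEq ι] (hA : A.Nonneg) (k : ℕ) : (A ^ k).Nonneg := by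
  induction k with
  | zero => exact (pow_zero A).symm ▸ one
  | succ k ih => exact (pow_succ A k).symm ▸ ih.mul hA

theorem smul (hA : A.Nonneg) {c : ℝ} (hc : 0 ≤ c) : (c • A).Nonneg := fun i j =>
  mul_nonneg hc (hA i j)

theorem vecMul_nonneg [Fintype m] {M : Matrix m n ℝ} (hM : M.Nonneg) {v : m → ℝ}
    (hv : ∀ i, 0 ≤ v i) (j : n) : 0 ≤ (v ᵥ* M) j :=
  Finset.sum_nonneg fun i _ => mul_nonneg (hv i) (hM i j)

end Nonneg

namespace IsMetzler

variable {F : Matrix ι ι ℝ}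

theorem nonneg_add_smul_one [DecidableEq ι] (hF : F.IsMetzler) {c : ℝ} (hc : ∀ i, -F i i ≤ c) :
    (F + c • 1).Nonneg := fun i j => by
  by_cases h : i = j
  · subst h
    simpa [neg_le_iff_add_nonneg, add_comm] using hc i
  · simpa [h] using hF i j h

theorem pos_of_nonneg_of_vecMul_neg [Fintype ι] (hF : F.IsMetzler) {v : ι → ℝ}
    (hv : ∀ i, 0 ≤ v i) {j : ι} (hvF : (v ᵥ* F) j < 0) : 0 < v j := by
  refine (hv j).lt_of_ne fun hvj => hvF.not_ge (Finset.sum_nonneg fun i _ => ?_)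
  by_cases h : i = j
  · simp [h, ← hvj]
  · exact mul_nonneg (hv i) (hF i j h)

end IsMetzler

section Neumann

variable [Fintype ι] [DecidableEq ι]

attribute [local instance] Matrix.linftyOpNormedRing Matrix.linftyOpNormedAlgebra

theorem Nonneg.inv_one_sub {X : Matrix ι ι ℝ} (hX : X.Nonneg) (hX₁ : ‖X‖ < 1) :
    (1 - X)⁻¹.Nonneg := by
  have hsum := summable_geometric_of_norm_lt_one hX₁
  rw [inv_eq_left_inv (geom_series_mul_neg X hX₁)]
  refine fun i j => (?_ : 0 ≤ (∑' k, X ^ k) i j)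
  rw [show (∑' k, X ^ k) i = ∑' k, (X ^ k) i from tsum_apply hsum,
    tsum_apply (Pi.summable.1 hsum i)]
  exact tsum_nonneg fun k => hX.pow k i j

theorem Nonneg.inv_sub_smul_one {A : Matrix ι ι ℝ} (hA : IsUnit A.det) (hA' : A⁻¹.Nonneg)
    {ε : ℝ} (hε : 0 ≤ ε) (hεA : ε * ‖A⁻¹‖ < 1) : (A - ε • 1)⁻¹.Nonneg := by
  have hfac : A - ε • 1 = A * (1 - ε • A⁻¹) := by
    rw [mul_sub, mul_one, mul_smul_comm, mul_nonsing_inv _ hA]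
  rw [hfac, mul_inv_rev]
  exact (Nonneg.inv_one_sub (hA'.smul hε) (by rwa [norm_smul, Real.norm_of_nonneg hε])).mul hA'

theorem Nonneg.inv_smul_one_sub {B : Matrix ι ι ℝ} (hB : B.Nonneg) {μ : ℝ} (hμ : ‖B‖ < μ) :
    (μ • 1 - B)⁻¹.Nonneg := by
  have hμ₀ : 0 < μ := (norm_nonneg B).trans_lt hμ
  have hμ₀' : 0 ≤ μ⁻¹ := inv_nonneg.2 hμ₀.le
  have hfac : μ • 1 - B = (μ • 1 : Matrix ι ι ℝ) * (1 - μ⁻¹ • B) := by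
    rw [mul_sub, mul_one, smul_mul_assoc, one_mul, smul_smul, mul_inv_cancel₀ hμ₀.ne', one_smul]
  have hscalar : (μ • 1 : Matrix ι ι ℝ)⁻¹ = μ⁻¹ • 1 := by
    refine inv_eq_left_inv ?_
    rw [smul_mul_smul, one_mul, inv_mul_cancel₀ hμ₀.ne', one_smul]
  rw [hfac, mul_inv_rev, hscalar]
  refine (Nonneg.inv_one_sub (hB.smul hμ₀') ?_).mul (Nonneg.one.smul hμ₀')
  rwa [norm_smul, Real.norm_of_nonneg hμ₀', inv_mul_lt_iff₀ hμ₀, mul_one]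

theorem IsMetzler.nonneg_inv_neg {F : Matrix ι ι ℝ} (hF : F.IsMetzler)
    (hσ : ∀ t ∈ spectrum ℝ F, t < 0) : (-F)⁻¹.Nonneg := by
  set c := ∑ i, |F i i|
  have hc : 0 ≤ c := Finset.sum_nonneg fun i _ => abs_nonneg _
  set B := F + c • 1
  have hB : B.Nonneg := hF.nonneg_add_smul_one fun i => (neg_le_abs _).trans
    (Finset.single_le_sum (fun k _ => abs_nonneg (F k k)) (Finset.mem_univ i))
  have hdet : ∀ t : ℝ, 0 ≤ t → IsUnit (t • 1 - F).det := fun t ht => by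
    rw [← isUnit_iff_isUnit_det, ← Algebra.algebraMap_eq_smul_one, ← spectrum.notMem_iff]
    exact fun hmem => (hσ t hmem).not_ge ht
  set Λ := ‖B‖ + 1
  set S := {t : ℝ | (t • 1 - F)⁻¹.Nonneg}
  have hclosed : IsClosed (S ∩ Icc 0 Λ) := by
    have hcont : ContinuousOn (fun t : ℝ => (t • 1 - F)⁻¹) (Icc 0 Λ) := fun t ht =>
      ((continuousAt_matrix_inv _ (NormedRing.inverse_continuousAt (hdet t ht.1).unit)).comp
        (f := fun s : ℝ => s • (1 : Matrix ι ι ℝ) - F) (by fun_prop)).continuousWithinAt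
    rw [inter_comm]
    exact hcont.preimage_isClosed_of_isClosed isClosed_Icc isClosed_setOf_nonneg
  have hΛ : Λ ∈ S := by
    have : Λ • 1 - F = (Λ + c) • 1 - B := by simp only [B, add_smul]; abel
    simp only [S, mem_ofPred_eq, this]
    exact hB.inv_smul_one_sub (by linarith)
  have hstep : ∀ x ∈ S ∩ Ioc 0 Λ, (S ∩ Ico 0 x).Nonempty := by
    rintro x ⟨hxS, hx₀, -⟩
    set R := (x • 1 - F)⁻¹
    set ε := min x (‖R‖ + 1)⁻¹
    have hε₀ : 0 < ε := lt_min hx₀ (by positivity)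
    have hεR : ε * ‖R‖ < 1 :=
      calc ε * ‖R‖ ≤ (‖R‖ + 1)⁻¹ * ‖R‖ :=
            mul_le_mul_of_nonneg_right (min_le_right _ _) (norm_nonneg _)
        _ < 1 := by rw [inv_mul_lt_iff₀ (by positivity)]; linarith
    refine ⟨x - ε, ?_, sub_nonneg.2 (min_le_left _ _), sub_lt_self x hε₀⟩
    have : (x - ε) • 1 - F = (x • 1 - F) - ε • 1 := by rw [sub_smul]; abel
    simp only [S, mem_ofPred_eq, this]
    exact Nonneg.inv_sub_smul_one (hdet x hx₀.le) hxS hε₀.le hεR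
  simpa [S] using hclosed.mem_of_ge_of_forall_exists_lt hΛ (by positivity) hstep

end Neumann

end Matrix

/-- If `F` is Metzler and Hurwitz stable, then there exists a positive vector `v`
with `vᵀ F < 0` entrywise. -/
theorem positive_vector_of_metzler_hurwitz
    (n : ℕ) (F : Matrix (Fin n) (Fin n) ℝ)
    (hMetzler : ∀ i j, i ≠ j → 0 ≤ F i j)
    (hHurwitz : ∀ z ∈ spectrum ℂ (F.map (Complex.ofReal ·)), z.re < 0) :
    ∃ v : Fin n → ℝ, (∀ i, 0 < v i) ∧ ∀ j, (v ᵥ* F) j < 0 := by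
  have hσ : ∀ t ∈ spectrum ℝ F, t < 0 := fun t ht => by
    simpa using hHurwitz _ (map_mem_spectrum_map Complex.ofRealHom ht)
  have hunit : IsUnit (-F).det := by
    rw [← isUnit_iff_isUnit_det, ← zero_sub, ← map_zero (algebraMap ℝ (Matrix (Fin n) (Fin n) ℝ)),
      ← spectrum.notMem_iff]
    exact fun h => (hσ 0 h).false
  have hQ : (-F)⁻¹.Nonneg := IsMetzler.nonneg_inv_neg hMetzler hσ
  have hQF : (-F)⁻¹ * F = -1 := by
    rw [← neg_neg ((-F)⁻¹ * F), ← mul_neg, nonsing_inv_mul _ hunit]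
  have hvF : ∀ j, ((1 ᵥ* (-F)⁻¹) ᵥ* F) j < 0 := fun j => by
    simp [vecMul_vecMul, hQF, vecMul_neg]
  have hv : ∀ i, 0 ≤ (1 ᵥ* (-F)⁻¹) i := hQ.vecMul_nonneg fun _ => zero_le_one
  exact ⟨_, fun i => IsMetzler.pos_of_nonneg_of_vecMul_neg hMetzler hv (hvF i), hvF⟩
end

section
/- Let M be an n×n real Metzler matrix (all off-diagonal entries nonnegative). Then M has a real eigenvalue μ such that every (complex) eigenvalue λ of M satisfies Re λ ≤ μ; in other words, the spectral abscissa of a Metzler matrix is itself an eigenvalue. -/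
/-!
Adding a multiple of the identity makes a Metzler matrix entrywise nonnegative and shifts its
spectrum by a real constant, so it suffices to show that the spectral radius `ρ` of a nonnegative
matrix `A` is an eigenvalue. If `A v = μ v` with `‖μ‖ = ρ`, then `w i = ‖v i‖` satisfies `ρ w ≤ A w`,
so for `0 < s < ρ⁻¹` the Neumann series, which converges by Gelfand's formula, gives
`(1 - s A)⁻¹ w ≥ (1 - s ρ)⁻¹ w`. The right-hand side blows up as `s → ρ⁻¹`, so `1 - ρ⁻¹ A` is
not invertible.
-/

open Matrix Filter Topology

theorem summable_norm_pow_of_forall_norm_lt_one {𝒜 : Type*} [NormedRing 𝒜] [NormedAlgebra ℂ 𝒜]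
    [CompleteSpace 𝒜] [Nontrivial 𝒜] (a : 𝒜) (h : ∀ z ∈ spectrum ℂ a, ‖z‖ < 1) :
    Summable (fun k => ‖a ^ k‖) := by
  have hρ : spectralRadius ℂ a < 1 :=
    spectrum.spectralRadius_lt_of_forall_lt a fun z hz => by exact_mod_cast h z hz
  obtain ⟨q, hρq, hq1⟩ := ENNReal.lt_iff_exists_nnreal_btwn.mp hρ
  have hroot := (spectrum.pow_nnnorm_pow_one_div_tendsto_nhds_spectralRadius a).eventually
    (gt_mem_nhds hρq)
  refine Summable.of_norm_bounded_eventually_nat (g := fun k => (q : ℝ) ^ k)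
    (summable_geometric_of_lt_one q.2 (by exact_mod_cast hq1)) ?_
  filter_upwards [hroot, eventually_gt_atTop 0] with k hk hk0
  rw [← ENNReal.coe_rpow_of_nonneg _ (by positivity), ENNReal.coe_lt_coe, one_div] at hk
  rw [norm_norm, ← coe_nnnorm, ← NNReal.coe_pow, NNReal.coe_le_coe,
    ← NNReal.rpow_inv_natCast_pow (x := ‖a ^ k‖₊) hk0.ne']
  exact pow_le_pow_left₀ zero_le hk.le k

namespace Matrix

variable {ι : Type*} [Fintype ι]

theorem mulVec_mono_of_nonneg {R κ : Type*} [Semiring R] [PartialOrder R] [IsOrderedRing R]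
    {A : Matrix κ ι R} (hA : ∀ i j, 0 ≤ A i j) {u v : ι → R} (h : u ≤ v) :
    A *ᵥ u ≤ A *ᵥ v :=
  fun i => Finset.sum_le_sum fun j _ => mul_le_mul_of_nonneg_left (h j) (hA i j)

theorem pow_smul_le_pow_mulVec {R : Type*} [CommSemiring R] [PartialOrder R] [IsOrderedRing R]
    [DecidableEq ι] {A : Matrix ι ι R} (hA : ∀ i j, 0 ≤ A i j) {r : R} (hr : 0 ≤ r)
    {w : ι → R} (h : r • w ≤ A *ᵥ w) (k : ℕ) : r ^ k • w ≤ (A ^ k) *ᵥ w := by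
  induction k with
  | zero => simp
  | succ k ih =>
    calc r ^ (k + 1) • w = r ^ k • (r • w) := by rw [pow_succ, mul_smul]
      _ ≤ r ^ k • (A *ᵥ w) := smul_le_smul_of_nonneg_left h (pow_nonneg hr k)
      _ = A *ᵥ (r ^ k • w) := (mulVec_smul A _ w).symm
      _ ≤ A *ᵥ ((A ^ k) *ᵥ w) := mulVec_mono_of_nonneg hA ih
      _ = (A ^ (k + 1)) *ᵥ w := by rw [mulVec_mulVec, pow_succ']

theorem hasSum_mulVec_apply {R α κ : Type*} [Semiring R] [TopologicalSpace R]
    [IsTopologicalSemiring R] {f : α → Matrix κ ι R} {T : Matrix κ ι R} (hf : HasSum f T)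
    (w : ι → R) (i : κ) : HasSum (fun k => (f k *ᵥ w) i) ((T *ᵥ w) i) :=
  hasSum_sum fun j _ => (Pi.hasSum.mp (Pi.hasSum.mp hf i) j).mul_right (w j)

theorem exists_mulVec_eq_smul_of_mem_spectrum [DecidableEq ι] {K : Type*} [Field K]
    {A : Matrix ι ι K} {μ : K} (h : μ ∈ spectrum K A) : ∃ v ≠ 0, A *ᵥ v = μ • v := by
  rw [← spectrum_toLin', ← Module.End.hasEigenvalue_iff_mem_spectrum] at h
  obtain ⟨v, hv⟩ := h.exists_hasEigenvector
  exact ⟨v, hv.2, by simpa using hv.apply_eq_smul⟩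

theorem ofReal_mem_spectrum_map_ofReal_iff [DecidableEq ι] (A : Matrix ι ι ℝ) (x : ℝ) :
    (x : ℂ) ∈ spectrum ℂ (A.map (Complex.ofReal ·)) ↔ x ∈ spectrum ℝ A := by
  have : algebraMap ℂ (Matrix ι ι ℂ) x - A.map (Complex.ofReal ·) =
      Complex.ofRealHom.mapMatrix (algebraMap ℝ (Matrix ι ι ℝ) x - A) := by
    ext i j
    by_cases h : i = j <;> simp [h, algebraMap_eq_diagonal, Pi.algebraMap_apply]
  simp only [spectrum.mem_iff, isUnit_iff_isUnit_det, isUnit_iff_ne_zero, not_not, this,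
    ← RingHom.map_det, Complex.ofRealHom_eq_coe, Complex.ofReal_eq_zero]

theorem add_ofReal_mem_spectrum_map_add_smul_one_iff [DecidableEq ι] (M : Matrix ι ι ℝ) (c : ℝ)
    (z : ℂ) : z + c ∈ spectrum ℂ ((M + c • 1).map (Complex.ofReal ·)) ↔
      z ∈ spectrum ℂ (M.map (Complex.ofReal ·)) := by
  have : (M + c • 1).map (Complex.ofReal ·) =
      algebraMap ℂ (Matrix ι ι ℂ) c + M.map (Complex.ofReal ·) := by
    ext i j
    by_cases h : i = j <;> simp [h, algebraMap_eq_diagonal, Pi.algebraMap_apply, add_comm]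
  rw [this, spectrum.add_mem_add_iff]

theorem map_ofReal_pow [DecidableEq ι] (A : Matrix ι ι ℝ) (k : ℕ) :
    A.map (Complex.ofReal ·) ^ k = (A ^ k).map (Complex.ofReal ·) :=
  (map_pow Complex.ofRealHom.mapMatrix A k).symm

theorem summable_pow_of_forall_norm_lt_one [DecidableEq ι] [Nonempty ι] (A : Matrix ι ι ℝ)
    (h : ∀ z ∈ spectrum ℂ (A.map (Complex.ofReal ·)), ‖z‖ < 1) : Summable (A ^ ·) := by
  let _ := Matrix.linftyOpNormedRing (n := ι) (α := ℂ)
  let _ := Matrix.linftyOpNormedAlgebra (n := ι) (R := ℂ) (α := ℂ)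
  have hB : Summable fun k => (A ^ k).map (Complex.ofReal ·) :=
    (summable_norm_pow_of_forall_norm_lt_one _ h).of_norm.congr (map_ofReal_pow A)
  refine Pi.summable.mpr fun i => Pi.summable.mpr fun j => ?_
  exact Complex.summable_ofReal.mp (Pi.summable.mp (Pi.summable.mp hB i) j)

theorem summable_pow_smul_of_forall_norm_le [DecidableEq ι] [Nonempty ι] (A : Matrix ι ι ℝ)
    {ρ s : ℝ} (hspec : ∀ z ∈ spectrum ℂ (A.map (Complex.ofReal ·)), ‖z‖ ≤ ρ) (hs : 0 < s)
    (hsρ : s * ρ < 1) : Summable ((s • A) ^ ·) := by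
  refine summable_pow_of_forall_norm_lt_one _ fun z hz => ?_
  have hmap : (s • A).map (Complex.ofReal ·) = Units.mk0 (s : ℂ) (by exact_mod_cast hs.ne') •
      A.map (Complex.ofReal ·) := by
    ext; simp
  rw [hmap, spectrum.unit_smul_eq_smul] at hz
  obtain ⟨μ, hμ, rfl⟩ := hz
  calc ‖(Units.mk0 (s : ℂ) _) • μ‖ = s * ‖μ‖ := by
        simp [Units.smul_def, Complex.norm_real, abs_of_pos hs]
    _ ≤ s * ρ := mul_le_mul_of_nonneg_left (hspec μ hμ) hs.le
    _ < 1 := hsρ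

theorem norm_smul_norm_le_mulVec_norm {A : Matrix ι ι ℝ} (hA : ∀ i j, 0 ≤ A i j) {μ : ℂ}
    {v : ι → ℂ} (hv : A.map (Complex.ofReal ·) *ᵥ v = μ • v) :
    ‖μ‖ • (‖v ·‖) ≤ A *ᵥ (‖v ·‖) := fun i => by
  calc ‖μ‖ * ‖v i‖ = ‖(A.map (Complex.ofReal ·) *ᵥ v) i‖ := by
        rw [hv, Pi.smul_apply, smul_eq_mul, norm_mul]
    _ ≤ ∑ j, ‖(A i j : ℂ) * v j‖ := norm_sum_le _ _
    _ = (A *ᵥ (‖v ·‖)) i := by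
      simp only [norm_mul, Complex.norm_real, Real.norm_of_nonneg (hA _ _)]
      rfl

theorem smul_le_inv_one_sub_smul_mulVec [DecidableEq ι] {A : Matrix ι ι ℝ}
    (hA : ∀ i j, 0 ≤ A i j) {r s : ℝ} (hr : 0 ≤ r) (hs : 0 ≤ s) (hsr : s * r < 1)
    {w : ι → ℝ} (h : r • w ≤ A *ᵥ w) (hsum : Summable ((s • A) ^ ·)) :
    (1 - s * r)⁻¹ • w ≤ (1 - s • A)⁻¹ *ᵥ w := by
  have hsA : ∀ i j, 0 ≤ (s • A) i j := fun i j => mul_nonneg hs (hA i j)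
  have hsub : (s * r) • w ≤ (s • A) *ᵥ w := by
    rw [mul_smul, smul_mulVec]
    exact smul_le_smul_of_nonneg_left h hs
  rw [inv_eq_right_inv hsum.one_sub_mul_tsum_pow]
  intro i
  exact hasSum_le (fun k => pow_smul_le_pow_mulVec hsA (mul_nonneg hs hr) hsub k i)
    ((hasSum_geometric_of_lt_one (mul_nonneg hs hr) hsr).mul_right (w i))
    (hasSum_mulVec_apply hsum.hasSum w i)

theorem mem_spectrum_of_smul_le_mulVec [DecidableEq ι] {A : Matrix ι ι ℝ}
    (hA : ∀ i j, 0 ≤ A i j) {w : ι → ℝ} (hw0 : 0 ≤ w) (hw : w ≠ 0) {ρ : ℝ} (hρ : 0 < ρ)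
    (h : ρ • w ≤ A *ᵥ w) (hspec : ∀ z ∈ spectrum ℂ (A.map (Complex.ofReal ·)), ‖z‖ ≤ ρ) :
    ρ ∈ spectrum ℝ A := by
  obtain ⟨i, hi⟩ : ∃ i, 0 < w i := by
    obtain ⟨i, hi⟩ := Function.ne_iff.mp hw
    exact ⟨i, (hw0 i).lt_of_ne' hi⟩
  have : Nonempty ι := ⟨i⟩
  by_contra hρA
  have hdet : (1 - ρ⁻¹ • A).det ≠ 0 := by
    have hunit : IsUnit (algebraMap ℝ (Matrix ι ι ℝ) ρ - A) := not_not.mp hρA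
    have : 1 - ρ⁻¹ • A = ρ⁻¹ • (algebraMap ℝ (Matrix ι ι ℝ) ρ - A) := by
      rw [smul_sub, Algebra.algebraMap_eq_smul_one, smul_smul, inv_mul_cancel₀ hρ.ne', one_smul]
    rw [this, det_smul, ← isUnit_iff_ne_zero]
    exact ((isUnit_iff_ne_zero.mpr (by positivity)).pow _).mul
      ((isUnit_iff_isUnit_det _).mp hunit)
  have hcont : ContinuousAt (fun s : ℝ => ((1 - s • A)⁻¹ *ᵥ w) i) ρ⁻¹ := by
    have hinv : ContinuousAt Inv.inv (1 - ρ⁻¹ • A) :=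
      continuousAt_matrix_inv _ (Ring.inverse_eq_inv' (G₀ := ℝ) ▸ continuousAt_inv₀ hdet)
    have hlin : Continuous fun s : ℝ => 1 - s • A := by fun_prop
    have happ : Continuous fun P : Matrix ι ι ℝ => (P *ᵥ w) i :=
      (continuous_apply i).comp (continuous_id.matrix_mulVec continuous_const)
    exact happ.continuousAt.comp (hinv.comp (f := fun s : ℝ => 1 - s • A) hlin.continuousAt)
  have hmul : ∀ s < ρ⁻¹, s * ρ < 1 := fun s hs => by rwa [← lt_inv_mul_iff₀' hρ, mul_one]
  have hle : ∀ᶠ s in 𝓝[<] ρ⁻¹, (1 - s * ρ)⁻¹ * w i ≤ ((1 - s • A)⁻¹ *ᵥ w) i := by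
    filter_upwards [Ioo_mem_nhdsLT (inv_pos.mpr hρ)] with s ⟨hs0, hsρ⟩
    exact smul_le_inv_one_sub_smul_mulVec hA hρ.le hs0.le (hmul s hsρ) h
      (summable_pow_smul_of_forall_norm_le A hspec hs0 (hmul s hsρ)) i
  have hblow : Tendsto (fun s => (1 - s * ρ)⁻¹ * w i) (𝓝[<] ρ⁻¹) atTop := by
    refine (tendsto_inv_nhdsGT_zero.comp (tendsto_nhdsWithin_iff.mpr ⟨?_, ?_⟩)).atTop_mul_const hi
    · have hc : Continuous fun s : ℝ => 1 - s * ρ := by fun_prop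
      simpa [inv_mul_cancel₀ hρ.ne'] using (hc.tendsto ρ⁻¹).mono_left nhdsWithin_le_nhds
    · filter_upwards [self_mem_nhdsWithin] with s hs
      exact sub_pos.mpr (hmul s hs)
  exact not_tendsto_atTop_of_tendsto_nhds (hcont.tendsto.mono_left nhdsWithin_le_nhds)
    (tendsto_atTop_mono' _ hle hblow)

theorem exists_mem_spectrum_forall_norm_le_of_nonneg [DecidableEq ι] [Nonempty ι]
    {A : Matrix ι ι ℝ} (hA : ∀ i j, 0 ≤ A i j) :
    ∃ ρ : ℝ, (ρ : ℂ) ∈ spectrum ℂ (A.map (Complex.ofReal ·)) ∧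
      ∀ z ∈ spectrum ℂ (A.map (Complex.ofReal ·)), ‖z‖ ≤ ρ := by
  let _ := Matrix.linftyOpNormedRing (n := ι) (α := ℂ)
  let _ := Matrix.linftyOpNormedAlgebra (n := ι) (R := ℂ) (α := ℂ)
  obtain ⟨μ, hμ, hmax⟩ := Set.exists_max_image _ (‖·‖) (finite_spectrum _)
    (spectrum.nonempty (A.map (Complex.ofReal ·)))
  refine ⟨‖μ‖, ?_, hmax⟩
  rcases (norm_nonneg μ).eq_or_lt with h0 | hpos
  · rwa [← h0, Complex.ofReal_zero, ← norm_eq_zero.mp h0.symm]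
  obtain ⟨v, hv0, hv⟩ := exists_mulVec_eq_smul_of_mem_spectrum hμ
  refine (ofReal_mem_spectrum_map_ofReal_iff A _).mpr
    (mem_spectrum_of_smul_le_mulVec hA (fun i => norm_nonneg (v i)) ?_ hpos
      (norm_smul_norm_le_mulVec_norm hA hv) hmax)
  simpa [funext_iff] using hv0

theorem exists_nonneg_add_smul_one [DecidableEq ι] {M : Matrix ι ι ℝ}
    (hM : ∀ i j, i ≠ j → 0 ≤ M i j) : ∃ c : ℝ, ∀ i j, 0 ≤ (M + c • 1) i j := by
  refine ⟨∑ k, |M k k|, fun i j => ?_⟩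
  rcases eq_or_ne i j with rfl | hij
  · have := Finset.single_le_sum (fun k _ => abs_nonneg (M k k)) (Finset.mem_univ i)
    simp only [add_apply, smul_apply, one_apply_eq, smul_eq_mul, mul_one]
    linarith [neg_abs_le (M i i)]
  · simpa [one_apply_ne hij] using hM i j hij

end Matrix

/-- A Metzler matrix `M` has a real eigenvalue `μ` dominating the real parts of all of its
(complex) eigenvalues: the spectral abscissa of a Metzler matrix is itself an eigenvalue. -/
theorem metzler_spectral_abscissa_is_eigenvalue
    (n : ℕ) (hn : 0 < n) (M : Matrix (Fin n) (Fin n) ℝ)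
    (hMetzler : ∀ i j, i ≠ j → 0 ≤ M i j) :
    ∃ μ : ℝ, (μ : ℂ) ∈ spectrum ℂ (M.map (Complex.ofReal ·)) ∧
      ∀ z ∈ spectrum ℂ (M.map (Complex.ofReal ·)), z.re ≤ μ := by
  have : Nonempty (Fin n) := ⟨⟨0, hn⟩⟩
  obtain ⟨c, hc⟩ := exists_nonneg_add_smul_one hMetzler
  obtain ⟨ρ, hρ, hmax⟩ := exists_mem_spectrum_forall_norm_le_of_nonneg hc
  refine ⟨ρ - c, ?_, fun z hz => ?_⟩
  · rw [← add_ofReal_mem_spectrum_map_add_smul_one_iff M c]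
    simpa using hρ
  · have hz' := hmax _ ((add_ofReal_mem_spectrum_map_add_smul_one_iff M c z).mpr hz)
    have hre := Complex.re_le_norm (z + c)
    simp only [Complex.add_re, Complex.ofReal_re] at hre
    linarith
end
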